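/- Let w ∈ ℂ with |w| ≥ R₀ := e√(2/(e² − 1)) ≈ 1.5208 (note R₀ > √2, so in particular w² ≠ 2). Then |Log(w²/(2 − w²))| ≥ 2, where Log denotes the principal branch of the complex logarithm. -/

import Mathlib

noncomputable section

/-- `R₀ = e √(2/(e² - 1))`. -/
def R₀ : ℝ := Real.exp 1 * Real.sqrt (2 / (Real.exp 1 ^ 2 - 1))

/-! If `|Log z| < 2` with `z = w²/(2 - w²)`, then `ζ = -Log z` has `|Im ζ| < 2 < 2π/3`, so
`cos (Im ζ) ≥ -1/2` and `|1 + e^ζ|² = e^{2 Re ζ} + 2 e^{Re ζ} cos (Im ζ) + 1 ≥ 3/4`.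
But `1 + e^ζ = 1 + 1/z = 2/w²`, and `2/|w|² ≤ 2/R₀² = 1 - e⁻²`, whose square is just
below `3/4`. -/

open Complex

lemma Real.neg_one_half_le_cos_of_abs_le {y : ℝ} (hy : |y| ≤ 2 * Real.pi / 3) :
    -(1 / 2) ≤ Real.cos y := by
  rw [← Real.cos_abs]
  calc -(1 / 2) = Real.cos (Real.pi - Real.pi / 3) := by
        rw [Real.cos_pi_sub, Real.cos_pi_div_three]
    _ ≤ Real.cos |y| :=
        Real.cos_le_cos_of_nonneg_of_le_pi (abs_nonneg y) (by linarith [Real.pi_pos]) (by linarith)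

lemma Complex.norm_one_add_exp_sq (ζ : ℂ) :
    ‖1 + exp ζ‖ ^ 2 = Real.exp ζ.re ^ 2 + 2 * Real.exp ζ.re * Real.cos ζ.im + 1 := by
  rw [Complex.sq_norm, normSq_apply]
  simp only [add_re, add_im, one_re, one_im, exp_re, exp_im]
  nlinarith [Real.sin_sq_add_cos_sq ζ.im]

lemma Complex.three_div_four_le_norm_one_add_exp_sq {ζ : ℂ} (h : -(1 / 2) ≤ Real.cos ζ.im) :
    3 / 4 ≤ ‖1 + exp ζ‖ ^ 2 := by
  rw [norm_one_add_exp_sq]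
  have hu := Real.exp_pos ζ.re
  nlinarith [sq_nonneg (Real.exp ζ.re - 1 / 2),
    mul_le_mul_of_nonneg_left h (by positivity : 0 ≤ 2 * Real.exp ζ.re)]

lemma Real.exp_one_sq : Real.exp 1 ^ 2 = Real.exp 2 := by
  rw [← Real.exp_nat_mul]
  norm_num

lemma R₀_pos : 0 < R₀ := by
  rw [R₀, Real.exp_one_sq]
  have he : 1 < Real.exp 2 := Real.one_lt_exp_iff.mpr two_pos
  exact mul_pos (Real.exp_pos 1) (Real.sqrt_pos.mpr (div_pos two_pos (sub_pos.mpr he)))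

lemma two_div_R₀_sq : 2 / R₀ ^ 2 = 1 - Real.exp (-2) := by
  rw [R₀, Real.exp_one_sq]
  have he : 1 < Real.exp 2 := Real.one_lt_exp_iff.mpr two_pos
  rw [mul_pow, Real.sq_sqrt (div_nonneg zero_le_two (sub_pos.mpr he).le), Real.exp_one_sq,
    Real.exp_neg]
  field_simp

lemma one_sub_exp_neg_two_sq_lt : (1 - Real.exp (-2)) ^ 2 < 3 / 4 := by
  have he : Real.exp 2 < 2.7182818286 ^ 2 := by
    rw [← Real.exp_one_sq]
    gcongr
    exact Real.exp_one_lt_d9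
  have hinv : 1 / 2.7182818286 ^ 2 < Real.exp (-2) := by
    rw [Real.exp_neg, ← one_div]
    gcongr
  have hpos : Real.exp (-2) < 1 := Real.exp_lt_one_iff.mpr (by norm_num)
  nlinarith

/-- If `|w| ≥ R₀` then `|Log(w²/(2 - w²))| ≥ 2`. -/
theorem stmt_0 (w : ℂ) (hw : R₀ ≤ ‖w‖) :
    2 ≤ ‖Complex.log (w ^ 2 / (2 - w ^ 2))‖ := by
  have hw0 : 0 < ‖w‖ := R₀_pos.trans_le hw
  have hbound : 2 / ‖w‖ ^ 2 ≤ 1 - Real.exp (-2) := by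
    rw [← two_div_R₀_sq]
    have := R₀_pos
    gcongr
  have hw2 : 2 - w ^ 2 ≠ 0 := by
    intro h
    rw [show ‖w‖ ^ 2 = 2 by rw [← norm_pow, ← sub_eq_zero.mp h]; norm_num] at hbound
    linarith [Real.exp_pos (-2)]
  have hz : w ^ 2 / (2 - w ^ 2) ≠ 0 := div_ne_zero (pow_ne_zero 2 (norm_pos_iff.mp hw0)) hw2
  by_contra! hlog
  have hexp : 1 + exp (-log (w ^ 2 / (2 - w ^ 2))) = 2 / w ^ 2 := by
    rw [exp_neg, exp_log hz, inv_div]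
    field_simp [norm_pos_iff.mp hw0]
    ring
  have hcos : -(1 / 2) ≤ Real.cos (-log (w ^ 2 / (2 - w ^ 2))).im := by
    refine Real.neg_one_half_le_cos_of_abs_le ?_
    have := abs_im_le_norm (-log (w ^ 2 / (2 - w ^ 2)))
    rw [norm_neg] at this
    linarith [Real.pi_gt_three]
  have hlower := three_div_four_le_norm_one_add_exp_sq hcos
  rw [hexp, norm_div, norm_pow, Complex.norm_ofNat] at hlower
  have hupper : (2 / ‖w‖ ^ 2) ^ 2 < 3 / 4 :=
    (pow_le_pow_left₀ (by positivity) hbound 2).trans_lt one_sub_exp_neg_two_sq_lt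
  linarith

end
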